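/- Let 0 < p < ∞ and let w ∈ L^q(Ω) for some q > p, and assume ℙ(w ≠ 0) > 1 − 2 e^{−2+γ} (≈ 0.483), where γ is Euler's constant. Then there exist constants C₁ = C₁(p,w) > 0 and C₂ = C₂(p,w) > 0, independent of the sequence (x_n), such that for every (x_n)_{n≥1} ∈ ℓ² and ξ = Σ_{n≥1} r_n x_n one has C₁⁻¹ (Σ_{n≥1} x_n²)^{1/2} ≤ ‖w ξ‖_p ≤ C₂ (Σ_{n≥1} x_n²)^{1/2}. -/

import Mathlib

/-!
Upper bound: Hölder's inequality with `1/p = 1/q + 1/s` reduces it to Khintchine's upper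
inequality `‖ξ‖_n ≤ K_n ‖x‖₂`, which follows from `|y|^n ≤ 2 n! cosh y` and the moment generating
function `E exp(t S_N) = ∏ cosh(t x_k) ≤ exp(t² ‖x‖₂² / 2)` of the partial sums, passing to the
limit by Fatou.

Lower bound: the partial sums satisfy the anti-concentration estimate
`P(|S_N| < σ_N / 5000) ≤ 0.501`. If some `|x_j|` is large, then conditionally on the other signs
at most one of the two values of `r_j` puts `S_N` into that small interval. If all `|x_k|` are
small, then `E cos(s S_N) = ∏ cos(s x_k)` is tiny for `s = 100 / σ_N`, while `cos(s S_N) ≥ 0.9998`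
on the event, and Markov's inequality for `1 + cos(s S_N)` bounds its probability by about `1/2`.
The estimate passes to `ξ`. Since `1 - 2 e^{γ-2} > 0.501`, some level `δ > 0` has
`P(|w| > δ) > 0.501` strictly, so `|w ξ| ≥ δ ‖x‖₂ / 10000` on an event whose probability is bounded
below independently of `x`, and Chebyshev's inequality gives the lower bound.
-/

open MeasureTheory ProbabilityTheory ENNReal

def IsRademacherSeq {Ω : Type*} [MeasurableSpace Ω] (P : Measure Ω) (r : ℕ → Ω → ℝ) : Prop :=
  (∀ n, Measurable (r n)) ∧
  iIndepFun r P ∧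
  (∀ n, P {ω | r n ω = 1} = 1/2 ∧ P {ω | r n ω = -1} = 1/2)

open Real Filter Topology

lemma eulerMascheroniConstant_lt_three_fifths : eulerMascheroniConstant < 3 / 5 := by
  have h32 : eulerMascheroniSeq' 32 = harmonic 32 - Real.log 32 := by
    simp [eulerMascheroniSeq']
  have harm : (harmonic 32 : ℝ) < 4.0586 := by
    have : (harmonic 32 : ℚ) < 4.0586 := by norm_num [harmonic, Finset.sum_range_succ]
    simpa using (Rat.cast_lt (K := ℝ)).2 this
  have log32 : Real.log 32 = 5 * Real.log 2 := by
    rw [show (32 : ℝ) = 2 ^ 5 by norm_num, Real.log_pow]; norm_num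
  linarith [eulerMascheroniConstant_lt_eulerMascheroniSeq' 32, Real.log_two_gt_d9]

lemma lt_one_sub_two_mul_exp_neg_two_add_eulerMascheroniConstant :
    (0.501 : ℝ) < 1 - 2 * Real.exp (-2 + eulerMascheroniConstant) := by
  have h14 : (4.02 : ℝ) < Real.exp 1.4 := by
    have h04 := Real.quadratic_le_exp_of_nonneg (x := (0.4 : ℝ)) (by norm_num)
    rw [show (1.4 : ℝ) = 1 + 0.4 by norm_num, Real.exp_add]
    nlinarith [Real.exp_one_gt_d9]
  have : Real.exp (-2 + eulerMascheroniConstant) < Real.exp (-1.4) :=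
    Real.exp_lt_exp.2 (by linarith [eulerMascheroniConstant_lt_three_fifths])
  rw [Real.exp_neg] at this
  have : (Real.exp 1.4)⁻¹ < 1 / 4.02 := by
    rw [← one_div]; exact one_div_lt_one_div_of_lt (by norm_num) h14
  linarith

lemma Real.prod_cos_le_exp_neg_sum_sq {ι : Type*} (s : Finset ι) (u : ι → ℝ)
    (hu : ∀ i ∈ s, |u i| ≤ π / 2) :
    ∏ i ∈ s, Real.cos (u i) ≤ Real.exp (-(2 / π ^ 2) * ∑ i ∈ s, u i ^ 2) := by
  rw [Finset.mul_sum, Real.exp_sum]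
  refine Finset.prod_le_prod (fun i hi => Real.cos_nonneg_of_mem_Icc ?_) fun i hi => ?_
  · exact abs_le.1 (hu i hi)
  · calc Real.cos (u i) ≤ 1 - 2 / π ^ 2 * u i ^ 2 :=
          Real.cos_le_one_sub_mul_cos_sq ((hu i hi).trans (by linarith [Real.pi_pos]))
      _ ≤ Real.exp (-(2 / π ^ 2) * u i ^ 2) := by
          linarith [Real.add_one_le_exp (-(2 / π ^ 2) * u i ^ 2)]

lemma Real.pow_abs_le_two_mul_factorial_mul_cosh (y : ℝ) (n : ℕ) :
    |y| ^ n ≤ 2 * n.factorial * Real.cosh y := by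
  have h1 := Real.pow_div_factorial_le_exp _ (abs_nonneg y) n
  have h2 : Real.exp |y| ≤ 2 * Real.cosh y := by
    rw [← Real.cosh_abs, Real.cosh_eq]; linarith [Real.exp_pos (-|y|)]
  rw [div_le_iff₀ (by positivity)] at h1
  nlinarith [(Nat.cast_pos.2 (Nat.factorial_pos n) : (0 : ℝ) < n.factorial)]

lemma measureReal_cos_ge_le {Ω : Type*} [MeasurableSpace Ω] {P : Measure Ω}
    [IsProbabilityMeasure P] {Y : Ω → ℝ} (hY : AEMeasurable Y P) {c : ℝ} (hc : -1 < c) :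
    P.real {ω | c ≤ Real.cos (Y ω)} ≤ (1 + ∫ ω, Real.cos (Y ω) ∂P) / (1 + c) := by
  have hcos : Integrable (fun ω => Real.cos (Y ω)) P :=
    .of_bound hY.cos.aestronglyMeasurable 1 (.of_forall fun ω => Real.abs_cos_le_one (Y ω))
  have markov := mul_meas_ge_le_integral_of_nonneg
    (.of_forall fun ω => show (0 : ℝ) ≤ 1 + Real.cos (Y ω) by linarith [Real.neg_one_le_cos (Y ω)])
    ((integrable_const 1).add hcos) (1 + c)
  simp only [add_le_add_iff_left, integral_add (integrable_const 1) hcos, integral_const,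
    probReal_univ, smul_eq_mul, one_mul] at markov
  rwa [le_div_iff₀ (by linarith), mul_comm]

lemma exists_pos_lt_measure_lt_abs {Ω : Type*} [MeasurableSpace Ω] {P : Measure Ω}
    {w : Ω → ℝ} {c : ℝ≥0∞} (hc : c < P {ω | w ω ≠ 0}) : ∃ δ > 0, c < P {ω | δ < |w ω|} := by
  have hunion : {ω | w ω ≠ 0} = ⋃ n : ℕ, {ω | 1 / (n + 1 : ℝ) < |w ω|} := by
    ext ω
    simp only [Set.mem_ofPred_eq, Set.mem_iUnion, ← abs_pos]
    exact ⟨fun h => exists_nat_one_div_lt h, fun ⟨n, hn⟩ => lt_trans (by positivity) hn⟩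
  have hmono : Monotone fun n : ℕ => {ω | 1 / (n + 1 : ℝ) < |w ω|} := fun m n hmn ω hω =>
    lt_of_le_of_lt (one_div_le_one_div_of_le (by positivity) (by simpa using hmn) :
      1 / (n + 1 : ℝ) ≤ 1 / (m + 1 : ℝ)) hω
  rw [hunion, hmono.measure_iUnion] at hc
  obtain ⟨n, hn⟩ := lt_iSup_iff.1 hc
  exact ⟨1 / (n + 1), by positivity, hn⟩

lemma ofReal_mul_rpow_le_eLpNorm {Ω : Type*} [MeasurableSpace Ω] {P : Measure Ω} {f : Ω → ℝ}
    (hf : AEStronglyMeasurable f P) {p ε κ : ℝ} (hp : 0 < p) (hε : 0 ≤ ε) (hκ : 0 ≤ κ)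
    (hmeas : ENNReal.ofReal κ ≤ P {ω | ε ≤ |f ω|}) :
    ENNReal.ofReal (ε * κ ^ (1 / p)) ≤ eLpNorm f (ENNReal.ofReal p) P := by
  have hcheb := mul_meas_ge_le_pow_eLpNorm' P (by simpa using hp) ENNReal.ofReal_ne_top hf
    (ENNReal.ofReal ε)
  simp only [Real.enorm_eq_ofReal_abs, ENNReal.ofReal_le_ofReal_iff (abs_nonneg _),
    ENNReal.toReal_ofReal hp.le] at hcheb
  rw [← ENNReal.rpow_le_rpow_iff hp, ENNReal.ofReal_rpow_of_nonneg (by positivity) hp.le,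
    Real.mul_rpow hε (by positivity), ← Real.rpow_mul hκ, one_div_mul_cancel hp.ne', Real.rpow_one,
    ENNReal.ofReal_mul (by positivity), ← ENNReal.ofReal_rpow_of_nonneg hε hp.le]
  calc ENNReal.ofReal ε ^ p * ENNReal.ofReal κ ≤ ENNReal.ofReal ε ^ p * P {ω | ε ≤ |f ω|} := by
        gcongr
    _ ≤ _ := hcheb

lemma measure_abs_lt_le_of_tendsto {Ω : Type*} [MeasurableSpace Ω] {P : Measure Ω}
    {X : ℕ → Ω → ℝ} {Y : Ω → ℝ} (hlim : ∀ᵐ ω ∂P, Tendsto (fun n => X n ω) atTop (𝓝 (Y ω)))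
    {a : ℝ} {β : ℝ≥0∞} (hX : ∀ᶠ n in atTop, P {ω | |X n ω| < a} ≤ β) :
    P {ω | |Y ω| < a} ≤ β := by
  have hsub : {ω | |Y ω| < a} ≤ᵐ[P] (⋃ M, ⋂ n ≥ M, {ω | |X n ω| < a} : Set Ω) := by
    filter_upwards [hlim] with ω hω (hY : |Y ω| < a)
    obtain ⟨M, hM⟩ := eventually_atTop.1 (hω.abs.eventually (gt_mem_nhds hY))
    exact Set.mem_iUnion.2 ⟨M, Set.mem_iInter₂.2 hM⟩
  obtain ⟨N₀, hN₀⟩ := eventually_atTop.1 hX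
  calc P {ω | |Y ω| < a}
      ≤ P (⋃ M, ⋂ n ≥ M, {ω | |X n ω| < a}) := measure_mono_ae hsub
    _ = ⨆ M, P (⋂ n ≥ M, {ω | |X n ω| < a}) :=
        Monotone.measure_iUnion fun M M' h => Set.iInter₂_mono' fun n hn => ⟨n, h.trans hn, le_rfl⟩
    _ ≤ β := iSup_le fun M => (measure_mono (Set.iInter₂_subset (max M N₀) (le_max_left _ _))).trans
        (hN₀ _ (le_max_right _ _))

def rademacherSum {Ω : Type*} (r : ℕ → Ω → ℝ) (x : ℕ → ℝ) (N : ℕ) : Ω → ℝ :=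
  fun ω => ∑ k ∈ Finset.range N, r k ω * x k

noncomputable def khintchineConst (n : ℕ) : ℝ :=
  (2 * n.factorial * Real.exp (1 / 2)) ^ (n : ℝ)⁻¹

lemma khintchineConst_pos (n : ℕ) : 0 < khintchineConst n := by
  unfold khintchineConst; positivity

namespace IsRademacherSeq

variable {Ω : Type*} [MeasurableSpace Ω] {P : Measure Ω} {r : ℕ → Ω → ℝ} (x : ℕ → ℝ)

lemma iIndepFun_mul_const (hr : IsRademacherSeq P r) : iIndepFun (fun k ω => r k ω * x k) P :=
  hr.2.1.comp (fun k y => y * x k) fun _ => measurable_mul_const _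

lemma measurable_rademacherSum (hr : IsRademacherSeq P r) (N : ℕ) :
    Measurable (rademacherSum r x N) :=
  Finset.measurable_fun_sum _ fun k _ => (hr.1 k).mul_const _

lemma indepFun_sum_of_notMem (hr : IsRademacherSeq P r) {F : Finset ℕ} {j : ℕ} (hj : j ∉ F) :
    IndepFun (fun ω => ∑ k ∈ F, r k ω * x k) (r j) P := by
  have hφ : Measurable fun v : F → ℝ => ∑ i, v i * x i :=
    Finset.measurable_sum _ fun i _ => (measurable_pi_apply i).mul_const _
  have hψ : Measurable fun v : ({j} : Finset ℕ) → ℝ => v ⟨j, Finset.mem_singleton_self j⟩ :=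
    measurable_pi_apply _
  have := (hr.2.1.indepFun_finset F {j} (Finset.disjoint_singleton_right.2 hj) hr.1).comp hφ hψ
  convert this using 1
  · ext ω
    exact (Finset.sum_coe_sort F fun k => r k ω * x k).symm
  · rfl

lemma aestronglyMeasurable_of_hasSum (hr : IsRademacherSeq P r)
    {ξ : Ω → ℝ} (hξ : ∀ᵐ ω ∂P, HasSum (fun n => r n ω * x n) (ξ ω)) :
    AEStronglyMeasurable ξ P :=
  aestronglyMeasurable_of_tendsto_ae atTop
    (fun N => (hr.measurable_rademacherSum x N).aestronglyMeasurable)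
    (hξ.mono fun _ h => h.tendsto_sum_nat)

variable [IsProbabilityMeasure P]

lemma ae_eq_one_or_eq_neg_one (hr : IsRademacherSeq P r) (k : ℕ) :
    ∀ᵐ ω ∂P, r k ω = 1 ∨ r k ω = -1 := by
  have hmeas : ∀ a : ℝ, MeasurableSet {ω | r k ω = a} := fun a =>
    hr.1 k (measurableSet_singleton a)
  have hdisj : Disjoint {ω | r k ω = 1} {ω | r k ω = -1} :=
    Set.disjoint_left.2 fun ω (h1 : r k ω = 1) (h2 : r k ω = -1) => by norm_num [h1] at h2
  have hunion : P ({ω | r k ω = 1} ∪ {ω | r k ω = -1}) = 1 := by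
    rw [measure_union hdisj (hmeas (-1)), (hr.2.2 k).1, (hr.2.2 k).2, ENNReal.add_halves]
  exact (prob_compl_eq_zero_iff ((hmeas 1).union (hmeas (-1)))).2 hunion

lemma integral_comp (hr : IsRademacherSeq P r) (k : ℕ) {E : Type*}
    [NormedAddCommGroup E] [NormedSpace ℝ E] [CompleteSpace E] (h : ℝ → E) :
    ∫ ω, h (r k ω) ∂P = (2⁻¹ : ℝ) • (h 1 + h (-1)) := by
  have hmeas : ∀ a : ℝ, MeasurableSet {ω | r k ω = a} := fun a =>
    hr.1 k (measurableSet_singleton a)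
  have hsplit : (fun ω => h (r k ω)) =ᵐ[P]
      fun ω => {ω | r k ω = 1}.indicator (fun _ => h 1) ω
        + {ω | r k ω = -1}.indicator (fun _ => h (-1)) ω := by
    filter_upwards [hr.ae_eq_one_or_eq_neg_one k] with ω hω
    rcases hω with hω | hω <;> norm_num [Set.indicator, hω]
  rw [integral_congr_ae hsplit, integral_add ((integrable_const _).indicator (hmeas 1))
    ((integrable_const _).indicator (hmeas (-1))), integral_indicator_const _ (hmeas 1),
    integral_indicator_const _ (hmeas (-1)), measureReal_def, measureReal_def,
    (hr.2.2 k).1, (hr.2.2 k).2, smul_add]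
  norm_num

lemma rademacherSum_mem_Icc (hr : IsRademacherSeq P r) (N : ℕ) :
    ∀ᵐ ω ∂P, rademacherSum r x N ω ∈
      Set.Icc (-∑ k ∈ Finset.range N, |x k|) (∑ k ∈ Finset.range N, |x k|) := by
  filter_upwards [ae_all_iff.2 hr.ae_eq_one_or_eq_neg_one] with ω hω
  refine abs_le.1 <| (Finset.abs_sum_le_sum_abs _ _).trans (Finset.sum_le_sum fun k _ => ?_)
  rcases hω k with h | h <;> simp [h]

lemma mgf_rademacherSum (hr : IsRademacherSeq P r) (N : ℕ) (t : ℝ) :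
    mgf (rademacherSum r x N) P t = ∏ k ∈ Finset.range N, Real.cosh (t * x k) := by
  have hsum : rademacherSum r x N = ∑ k ∈ Finset.range N, fun ω => r k ω * x k := by
    ext ω; simp [rademacherSum]
  rw [hsum, (hr.iIndepFun_mul_const x).mgf_sum (fun k => (hr.1 k).mul_const _)]
  refine Finset.prod_congr rfl fun k _ => ?_
  rw [mgf, hr.integral_comp k (fun y => Real.exp (t * (y * x k))), Real.cosh_eq]
  simp only [one_mul, neg_one_mul, mul_neg, smul_eq_mul]
  ring

lemma mgf_rademacherSum_le (hr : IsRademacherSeq P r) (N : ℕ) (t : ℝ) :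
    mgf (rademacherSum r x N) P t ≤ Real.exp (t ^ 2 * (∑ k ∈ Finset.range N, x k ^ 2) / 2) := by
  calc mgf (rademacherSum r x N) P t
      ≤ ∏ k ∈ Finset.range N, Real.exp ((t * x k) ^ 2 / 2) := by
        rw [hr.mgf_rademacherSum]
        exact Finset.prod_le_prod (fun k _ => (Real.cosh_pos _).le)
          fun k _ => Real.cosh_le_exp_half_sq _
    _ = Real.exp (t ^ 2 * (∑ k ∈ Finset.range N, x k ^ 2) / 2) := by
        rw [← Real.exp_sum, Finset.mul_sum, Finset.sum_div]
        exact congrArg _ (Finset.sum_congr rfl fun k _ => by ring)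

lemma integral_abs_rademacherSum_pow_le (hr : IsRademacherSeq P r)
    (N n : ℕ) (hσ : 0 < ∑ k ∈ Finset.range N, x k ^ 2) :
    ∫ ω, |rademacherSum r x N ω| ^ n ∂P
      ≤ 2 * n.factorial * Real.exp (1 / 2) * √(∑ k ∈ Finset.range N, x k ^ 2) ^ n := by
  set σ := √(∑ k ∈ Finset.range N, x k ^ 2)
  set S := rademacherSum r x N
  have hσpos : 0 < σ := Real.sqrt_pos.2 hσ
  have hσsq : σ ^ 2 = ∑ k ∈ Finset.range N, x k ^ 2 := Real.sq_sqrt hσ.le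
  have hexp : ∀ t, Integrable (fun ω => Real.exp (t * S ω)) P := fun t =>
    integrable_exp_mul_of_mem_Icc (hr.measurable_rademacherSum x N).aemeasurable
      (hr.rademacherSum_mem_Icc x N)
  have hmgf : ∀ t, t ^ 2 = σ⁻¹ ^ 2 → mgf S P t ≤ Real.exp (1 / 2) := fun t ht => by
    refine (hr.mgf_rademacherSum_le x N t).trans (Real.exp_le_exp.2 (le_of_eq ?_))
    rw [ht, ← hσsq]
    field_simp
  have hcosh : ∫ ω, Real.cosh (σ⁻¹ * S ω) ∂P = (mgf S P σ⁻¹ + mgf S P (-σ⁻¹)) / 2 := by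
    simp_rw [Real.cosh_eq, ← neg_mul]
    rw [integral_div, integral_add (hexp _) (hexp _), mgf, mgf]
  calc ∫ ω, |S ω| ^ n ∂P
      ≤ ∫ ω, σ ^ n * (2 * n.factorial) * Real.cosh (σ⁻¹ * S ω) ∂P := by
        have hint : Integrable (fun ω => σ ^ n * (2 * n.factorial) * Real.cosh (σ⁻¹ * S ω)) P :=
          (((hexp σ⁻¹).add (hexp (-σ⁻¹))).div_const 2).const_mul (σ ^ n * (2 * n.factorial))
            |>.congr (.of_forall fun ω => by simp only [Real.cosh_eq, neg_mul, Pi.add_apply])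
        refine integral_mono_of_nonneg (.of_forall fun ω => by positivity) hint
          (.of_forall fun ω => ?_)
        have := Real.pow_abs_le_two_mul_factorial_mul_cosh (σ⁻¹ * S ω) n
        rw [abs_mul, mul_pow, abs_inv, abs_of_pos hσpos, inv_pow] at this
        calc |S ω| ^ n = σ ^ n * ((σ ^ n)⁻¹ * |S ω| ^ n) := by field_simp
          _ ≤ _ := by
            beta_reduce; rw [mul_assoc]; exact mul_le_mul_of_nonneg_left this (by positivity)
    _ = σ ^ n * (2 * n.factorial) * ((mgf S P σ⁻¹ + mgf S P (-σ⁻¹)) / 2) := by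
        rw [integral_const_mul, hcosh]
    _ ≤ σ ^ n * (2 * n.factorial) * ((Real.exp (1 / 2) + Real.exp (1 / 2)) / 2) := by
        gcongr
        · exact hmgf _ rfl
        · exact hmgf _ (neg_sq _)
    _ = 2 * n.factorial * Real.exp (1 / 2) * σ ^ n := by ring

lemma eLpNorm_rademacherSum_le (hr : IsRademacherSeq P r) (N : ℕ)
    {n : ℕ} (hn : n ≠ 0) :
    eLpNorm (rademacherSum r x N) n P
      ≤ ENNReal.ofReal (khintchineConst n * √(∑ k ∈ Finset.range N, x k ^ 2)) := by
  rcases (Finset.sum_nonneg fun k _ => sq_nonneg (x k)).eq_or_lt with hσ | hσ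
  · have hzero : rademacherSum r x N = 0 := funext fun ω => Finset.sum_eq_zero fun k hk => by
      simp [pow_eq_zero_iff two_ne_zero |>.1 <|
        (Finset.sum_eq_zero_iff_of_nonneg fun k _ => sq_nonneg (x k)).1 hσ.symm k hk]
    simp [hzero]
  have hmem : MemLp (rademacherSum r x N) n P :=
    memLp_of_bounded (hr.rademacherSum_mem_Icc x N)
      (hr.measurable_rademacherSum x N).aestronglyMeasurable n
  rw [hmem.eLpNorm_eq_integral_rpow_norm (by simpa) (ENNReal.natCast_ne_top n)]
  refine ENNReal.ofReal_le_ofReal ?_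
  simp only [ENNReal.toReal_natCast, Real.rpow_natCast, Real.norm_eq_abs]
  calc (∫ ω, |rademacherSum r x N ω| ^ n ∂P) ^ (n : ℝ)⁻¹
      ≤ (2 * n.factorial * Real.exp (1 / 2) * √(∑ k ∈ Finset.range N, x k ^ 2) ^ n)
          ^ (n : ℝ)⁻¹ :=
        Real.rpow_le_rpow (integral_nonneg fun ω => by positivity)
          (hr.integral_abs_rademacherSum_pow_le x N n hσ) (by positivity)
    _ = khintchineConst n * √(∑ k ∈ Finset.range N, x k ^ 2) := by
        rw [Real.mul_rpow (by positivity) (by positivity), ← Real.rpow_natCast,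
          ← Real.rpow_mul (Real.sqrt_nonneg _), mul_inv_cancel₀ (by exact_mod_cast hn),
          Real.rpow_one, khintchineConst]

lemma eLpNorm_le_of_hasSum (hr : IsRademacherSeq P r)
    (hx : Summable fun n => x n ^ 2) {ξ : Ω → ℝ}
    (hξ : ∀ᵐ ω ∂P, HasSum (fun n => r n ω * x n) (ξ ω)) {n : ℕ} (hn : n ≠ 0) :
    eLpNorm ξ n P ≤ ENNReal.ofReal (khintchineConst n * √(∑' k, x k ^ 2)) := by
  refine (Lp.eLpNorm_lim_le_liminf_eLpNorm
    (fun N => (hr.measurable_rademacherSum x N).aestronglyMeasurable) ξ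
    (hξ.mono fun _ h => h.tendsto_sum_nat)).trans (liminf_le_of_frequently_le' ?_)
  refine .of_forall fun N => (hr.eLpNorm_rademacherSum_le x N hn).trans ?_
  have := khintchineConst_pos n
  gcongr
  exact hx.sum_le_tsum _ fun k _ => sq_nonneg (x k)

lemma integral_cos_rademacherSum (hr : IsRademacherSeq P r) (N : ℕ) (t : ℝ) :
    ∫ ω, Real.cos (t * rademacherSum r x N ω) ∂P = ∏ k ∈ Finset.range N, Real.cos (t * x k) := by
  have hchar : ∀ {X : Ω → ℝ}, Measurable X →
      charFun (P.map X) t = ∫ ω, Complex.exp (t * X ω * Complex.I) ∂P := fun hX => by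
    rw [charFun_apply_real, integral_map hX.aemeasurable (by fun_prop)]
  have hprod : charFun (P.map (rademacherSum r x N)) t
      = ∏ k ∈ Finset.range N, (Real.cos (t * x k) : ℂ) := by
    unfold rademacherSum
    rw [(hr.iIndepFun_mul_const x).restrict _ |>.charFun_map_fun_finsetSum_eq_prod
      fun k _ => ((hr.1 k).mul_const _).aemeasurable, Finset.prod_apply]
    refine Finset.prod_congr rfl fun k _ => ?_
    rw [hchar ((hr.1 k).mul_const _),
      hr.integral_comp k (fun y => Complex.exp (t * ↑(y * x k) * Complex.I)), Complex.ofReal_cos,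
      Complex.cos, Complex.real_smul]
    push_cast
    ring_nf
  have hint : Integrable (fun ω => Complex.exp (t * rademacherSum r x N ω * Complex.I)) P :=
    .of_bound (by have := hr.measurable_rademacherSum x N; fun_prop) 1 (.of_forall fun ω => by
      rw [← Complex.ofReal_mul, Complex.norm_exp_ofReal_mul_I])
  calc ∫ ω, Real.cos (t * rademacherSum r x N ω) ∂P
      = (∫ ω, Complex.exp (t * rademacherSum r x N ω * Complex.I) ∂P).re := by
        rw [← RCLike.re_to_complex, ← integral_re hint]
        simp_rw [RCLike.re_to_complex, ← Complex.ofReal_mul, Complex.exp_ofReal_mul_I_re]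
    _ = ∏ k ∈ Finset.range N, Real.cos (t * x k) := by
        rw [← hchar (hr.measurable_rademacherSum x N), hprod, ← Complex.ofReal_prod,
          Complex.ofReal_re]

lemma measure_abs_add_mul_lt_le_half (hr : IsRademacherSeq P r) (j : ℕ)
    {X : Ω → ℝ} (hX : Measurable X) (hind : IndepFun X (r j) P) {a t : ℝ} (ht : t ≤ |a|) :
    P {ω | |X ω + r j ω * a| < t} ≤ 1 / 2 := by
  have hdisj : Disjoint (Metric.ball (-a) t) (Metric.ball a t) := by
    refine Metric.ball_disjoint_ball ?_
    rw [Real.dist_eq, show -a - a = -(2 * a) by ring, abs_neg, abs_mul, abs_two]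
    linarith
  have hcover : {ω | |X ω + r j ω * a| < t} ≤ᵐ[P]
      (X ⁻¹' Metric.ball (-a) t ∩ r j ⁻¹' {1} ∪ X ⁻¹' Metric.ball a t ∩ r j ⁻¹' {-1} : Set Ω) := by
    filter_upwards [hr.ae_eq_one_or_eq_neg_one j] with ω hω (hlt : |X ω + r j ω * a| < t)
    change ω ∈ (_ : Set Ω)
    simp only [Set.mem_inter_iff, Set.mem_preimage, Metric.mem_ball,
      Real.dist_eq, Set.mem_singleton_iff]
    rcases hω with h | h
    · exact Or.inl ⟨by simpa [h] using hlt, h⟩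
    · exact Or.inr ⟨by simpa [h, ← sub_eq_add_neg] using hlt, h⟩
  have h1 : P (r j ⁻¹' {1}) = 1 / 2 := (hr.2.2 j).1
  have h2 : P (r j ⁻¹' {-1}) = 1 / 2 := (hr.2.2 j).2
  calc P {ω | |X ω + r j ω * a| < t}
      ≤ P (X ⁻¹' Metric.ball (-a) t ∩ r j ⁻¹' {1}) + P (X ⁻¹' Metric.ball a t ∩ r j ⁻¹' {-1}) :=
        (measure_mono_ae hcover).trans (measure_union_le _ _)
    _ = P (X ⁻¹' (Metric.ball (-a) t ∪ Metric.ball a t)) * (1 / 2) := by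
        rw [hind.measure_inter_preimage_eq_mul _ _ Metric.isOpen_ball.measurableSet
            (measurableSet_singleton _),
          hind.measure_inter_preimage_eq_mul _ _ Metric.isOpen_ball.measurableSet
            (measurableSet_singleton _), h1, h2, Set.preimage_union,
          measure_union (hdisj.preimage X) (hX Metric.isOpen_ball.measurableSet), add_mul]
    _ ≤ 1 / 2 := mul_le_of_le_one_left (by positivity) prob_le_one

-- With `s = 100 / σ`, `Real.prod_cos_le_exp_neg_sum_sq` gives the bound `exp (-20000 / π²)`.
lemma integral_cos_rademacherSum_le_of_forall_abs_lt (hr : IsRademacherSeq P r) (N : ℕ)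
    (hσ : 0 < √(∑ k ∈ Finset.range N, x k ^ 2))
    (hsmall : ∀ k ∈ Finset.range N, |x k| < √(∑ k ∈ Finset.range N, x k ^ 2) / 5000) :
    ∫ ω, Real.cos (100 / √(∑ k ∈ Finset.range N, x k ^ 2) * rademacherSum r x N ω) ∂P
      ≤ Real.exp (-2000) := by
  set σ := √(∑ k ∈ Finset.range N, x k ^ 2)
  have hσsq : σ ^ 2 = ∑ k ∈ Finset.range N, x k ^ 2 :=
    Real.sq_sqrt (Finset.sum_nonneg fun k _ => sq_nonneg (x k))
  have hs : 0 < 100 / σ := by positivity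
  rw [hr.integral_cos_rademacherSum]
  refine (Real.prod_cos_le_exp_neg_sum_sq _ _ fun k hk => ?_).trans (Real.exp_le_exp.2 ?_)
  · rw [abs_mul, abs_of_pos hs]
    calc 100 / σ * |x k| ≤ 100 / σ * (σ / 5000) := by gcongr; exact (hsmall k hk).le
      _ ≤ π / 2 := by field_simp; linarith [Real.pi_gt_three]
  · simp_rw [mul_pow]
    rw [← Finset.mul_sum, ← hσsq, div_pow, div_mul_cancel₀ _ (by positivity)]
    have hπ : π ^ 2 < 10 := by nlinarith [Real.pi_lt_d2, Real.pi_pos]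
    rw [neg_mul, neg_le_neg_iff, div_mul_eq_mul_div, le_div_iff₀ (by positivity)]
    nlinarith

lemma measure_abs_rademacherSum_lt_le_of_forall_abs_lt (hr : IsRademacherSeq P r) (N : ℕ)
    (hσ : 0 < √(∑ k ∈ Finset.range N, x k ^ 2))
    (hsmall : ∀ k ∈ Finset.range N, |x k| < √(∑ k ∈ Finset.range N, x k ^ 2) / 5000) :
    P {ω | |rademacherSum r x N ω| < √(∑ k ∈ Finset.range N, x k ^ 2) / 5000}
      ≤ ENNReal.ofReal 0.501 := by
  have hchar := hr.integral_cos_rademacherSum_le_of_forall_abs_lt x N hσ hsmall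
  set σ := √(∑ k ∈ Finset.range N, x k ^ 2)
  set S := rademacherSum r x N
  have hexp : Real.exp (-2000) ≤ 1 / 2001 := by
    rw [Real.exp_neg, ← one_div]
    exact one_div_le_one_div_of_le (by norm_num) (by linarith [Real.add_one_le_exp 2000])
  have hcos : {ω | |S ω| < σ / 5000} ⊆ {ω | 0.9998 ≤ Real.cos (100 / σ * S ω)} := by
    intro ω (hω : |S ω| < σ / 5000)
    have hsmall : |100 / σ * S ω| ≤ 1 / 50 := by
      rw [abs_mul, abs_of_pos (by positivity)]
      calc 100 / σ * |S ω| ≤ 100 / σ * (σ / 5000) := by gcongr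
        _ = 1 / 50 := by field_simp; norm_num
    have hsq : (100 / σ * S ω) ^ 2 ≤ (1 / 50) ^ 2 := by
      rw [← sq_abs]; exact pow_le_pow_left₀ (abs_nonneg _) hsmall 2
    show 0.9998 ≤ Real.cos (100 / σ * S ω)
    linarith [Real.one_sub_sq_div_two_le_cos (x := 100 / σ * S ω)]
  calc P {ω | |S ω| < σ / 5000}
      ≤ P {ω | 0.9998 ≤ Real.cos (100 / σ * S ω)} := measure_mono hcos
    _ = ENNReal.ofReal (P.real {ω | 0.9998 ≤ Real.cos (100 / σ * S ω)}) :=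
        (ofReal_measureReal).symm
    _ ≤ ENNReal.ofReal 0.501 := by
        refine ENNReal.ofReal_le_ofReal ((measureReal_cos_ge_le
          ((hr.measurable_rademacherSum x N).const_mul _).aemeasurable (by norm_num)).trans ?_)
        rw [div_le_iff₀ (by norm_num)]
        linarith

lemma measure_abs_rademacherSum_lt_le (hr : IsRademacherSeq P r)
    (N : ℕ) :
    P {ω | |rademacherSum r x N ω| < √(∑ k ∈ Finset.range N, x k ^ 2) / 5000}
      ≤ ENNReal.ofReal 0.501 := by
  by_cases hbig : ∃ j ∈ Finset.range N, √(∑ k ∈ Finset.range N, x k ^ 2) / 5000 ≤ |x j|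
  · obtain ⟨j, hj, hxj⟩ := hbig
    have hsplit : rademacherSum r x N
        = fun ω => (∑ k ∈ (Finset.range N).erase j, r k ω * x k) + r j ω * x j :=
      funext fun ω => (Finset.sum_erase_add _ _ hj).symm
    rw [hsplit]
    refine (hr.measure_abs_add_mul_lt_le_half j
      (Finset.measurable_fun_sum _ fun k _ => (hr.1 k).mul_const _)
      (hr.indepFun_sum_of_notMem x (Finset.notMem_erase j _)) hxj).trans ?_
    rw [one_div, ← ENNReal.ofReal_ofNat 2, ← ENNReal.ofReal_inv_of_pos two_pos]
    exact ENNReal.ofReal_le_ofReal (by norm_num)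
  push Not at hbig
  rcases (Real.sqrt_nonneg (∑ k ∈ Finset.range N, x k ^ 2)).eq_or_lt with hσ | hσ
  · rw [← hσ, zero_div]
    simp only [(abs_nonneg _).not_gt, Set.ofPred_false, measure_empty, zero_le]
  exact hr.measure_abs_rademacherSum_lt_le_of_forall_abs_lt x N hσ hbig

lemma measure_abs_lt_le_of_hasSum (hr : IsRademacherSeq P r)
    (hx : Summable fun n => x n ^ 2) {ξ : Ω → ℝ}
    (hξ : ∀ᵐ ω ∂P, HasSum (fun n => r n ω * x n) (ξ ω)) :
    P {ω | |ξ ω| < √(∑' k, x k ^ 2) / 10000} ≤ ENNReal.ofReal 0.501 := by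
  set σ := √(∑' k, x k ^ 2)
  have hσN : ∀ᶠ N in atTop, σ / 2 ≤ √(∑ k ∈ Finset.range N, x k ^ 2) := by
    rcases (Real.sqrt_nonneg _ : 0 ≤ σ).eq_or_lt with h0 | hpos
    · exact .of_forall fun N => by rw [show σ = 0 from h0.symm, zero_div]; positivity
    · exact ((Real.continuous_sqrt.tendsto _).comp hx.hasSum.tendsto_sum_nat).eventually_const_le
        (half_lt_self hpos)
  refine measure_abs_lt_le_of_tendsto (hξ.mono fun _ h => h.tendsto_sum_nat) ?_
  filter_upwards [hσN] with N hN
  refine (measure_mono fun ω (h : |rademacherSum r x N ω| < σ / 10000) => ?_).trans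
    (hr.measure_abs_rademacherSum_lt_le x N)
  show |rademacherSum r x N ω| < √(∑ k ∈ Finset.range N, x k ^ 2) / 5000
  linarith

lemma exists_eLpNorm_mul_le_of_hasSum (hr : IsRademacherSeq P r)
    {p q : ℝ} (hp : 0 < p) (hpq : p < q) {w : Ω → ℝ} (hw : MemLp w (ENNReal.ofReal q) P) :
    ∃ C > 0, ∀ (x : ℕ → ℝ) (ξ : Ω → ℝ), Summable (fun n => x n ^ 2) →
      (∀ᵐ ω ∂P, HasSum (fun n => r n ω * x n) (ξ ω)) →
      eLpNorm (fun ω => w ω * ξ ω) (ENNReal.ofReal p) P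
        ≤ ENNReal.ofReal (C * √(∑' n, x n ^ 2)) := by
  have hq : 0 < q := hp.trans hpq
  set s := (p⁻¹ - q⁻¹)⁻¹
  have hs : 0 < s := inv_pos.2 (sub_pos.2 (inv_strictAnti₀ hp hpq))
  have : ENNReal.HolderTriple (ENNReal.ofReal q) (ENNReal.ofReal s) (ENNReal.ofReal p) := by
    refine ⟨?_⟩
    rw [← ENNReal.ofReal_inv_of_pos hq, ← ENNReal.ofReal_inv_of_pos hs,
      ← ENNReal.ofReal_inv_of_pos hp, ← ENNReal.ofReal_add (by positivity) (by positivity), inv_inv,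
      add_sub_cancel]
  set n := ⌈s⌉₊
  have hn : n ≠ 0 := (Nat.ceil_pos.2 hs).ne'
  set W := (eLpNorm w (ENNReal.ofReal q) P).toReal
  have hK := khintchineConst_pos n
  refine ⟨(W + 1) * khintchineConst n, by positivity, fun x ξ hx hξ => ?_⟩
  have hξm := hr.aestronglyMeasurable_of_hasSum x hξ
  have hsn : ENNReal.ofReal s ≤ n := by
    rw [← ENNReal.ofReal_natCast]; exact ENNReal.ofReal_le_ofReal (Nat.le_ceil s)
  have holder := eLpNorm_smul_le_mul_eLpNorm (p := ENNReal.ofReal q) (q := ENNReal.ofReal s)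
    (r := ENNReal.ofReal p) hξm hw.1
  calc eLpNorm (fun ω => w ω * ξ ω) (ENNReal.ofReal p) P
      ≤ eLpNorm w (ENNReal.ofReal q) P * eLpNorm ξ (ENNReal.ofReal s) P := holder
    _ ≤ ENNReal.ofReal W * ENNReal.ofReal (khintchineConst n * √(∑' n, x n ^ 2)) := by
        gcongr
        · exact (ENNReal.ofReal_toReal hw.2.ne).ge
        · exact (eLpNorm_le_eLpNorm_of_exponent_le hsn hξm).trans
            (hr.eLpNorm_le_of_hasSum x hx hξ hn)
    _ ≤ ENNReal.ofReal ((W + 1) * khintchineConst n * √(∑' n, x n ^ 2)) := by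
        rw [← ENNReal.ofReal_mul ENNReal.toReal_nonneg, mul_assoc]
        exact ENNReal.ofReal_le_ofReal (by gcongr; linarith)

lemma exists_le_eLpNorm_mul_of_hasSum (hr : IsRademacherSeq P r)
    {p : ℝ} (hp : 0 < p) {w : Ω → ℝ} (hw : AEStronglyMeasurable w P)
    (hw0 : ENNReal.ofReal 0.501 < P {ω | w ω ≠ 0}) :
    ∃ C > 0, ∀ (x : ℕ → ℝ) (ξ : Ω → ℝ), Summable (fun n => x n ^ 2) →
      (∀ᵐ ω ∂P, HasSum (fun n => r n ω * x n) (ξ ω)) →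
      ENNReal.ofReal (C * √(∑' n, x n ^ 2))
        ≤ eLpNorm (fun ω => w ω * ξ ω) (ENNReal.ofReal p) P := by
  obtain ⟨δ, hδ, hPδ⟩ := exists_pos_lt_measure_lt_abs hw0
  obtain ⟨b, -, hb, hbP⟩ := ENNReal.lt_iff_exists_real_btwn.1 hPδ
  have hκ : 0 < b - 0.501 := sub_pos.2 ((ENNReal.ofReal_lt_ofReal_iff_of_nonneg (by norm_num)).1 hb)
  refine ⟨δ / 10000 * (b - 0.501) ^ (1 / p), by positivity, fun x ξ hx hξ => ?_⟩
  set σ := √(∑' n, x n ^ 2)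
  have hsub : {ω | δ < |w ω|} \ {ω | |ξ ω| < σ / 10000} ⊆ {ω | δ * (σ / 10000) ≤ |w ω * ξ ω|} :=
    fun ω ⟨(h1 : δ < |w ω|), (h2 : ¬ |ξ ω| < σ / 10000)⟩ => by
      show δ * (σ / 10000) ≤ |w ω * ξ ω|
      rw [abs_mul]
      exact mul_le_mul h1.le (not_lt.1 h2) (by positivity) (abs_nonneg _)
  have hmeas : ENNReal.ofReal (b - 0.501) ≤ P {ω | δ * (σ / 10000) ≤ |w ω * ξ ω|} :=
    calc ENNReal.ofReal (b - 0.501) = ENNReal.ofReal b - ENNReal.ofReal 0.501 :=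
          ENNReal.ofReal_sub _ (by norm_num)
      _ ≤ P {ω | δ < |w ω|} - P {ω | |ξ ω| < σ / 10000} :=
          tsub_le_tsub hbP.le (hr.measure_abs_lt_le_of_hasSum x hx hξ)
      _ ≤ P ({ω | δ < |w ω|} \ {ω | |ξ ω| < σ / 10000}) := le_measure_sdiff
      _ ≤ _ := measure_mono hsub
  have hwξ : AEStronglyMeasurable (fun ω => w ω * ξ ω) P :=
    hw.mul (hr.aestronglyMeasurable_of_hasSum x hξ)
  convert ofReal_mul_rpow_le_eLpNorm hwξ hp (by positivity) hκ.le hmeas using 2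
  ring

end IsRademacherSeq

/-- Weighted Khintchine inequality with the improved threshold
`ℙ(w ≠ 0) > 1 - 2 e^{-2+γ}`. -/
theorem weighted_khintchine_improved
    {Ω : Type*} [MeasurableSpace Ω] (P : Measure Ω) [IsProbabilityMeasure P]
    (r : ℕ → Ω → ℝ) (hr : IsRademacherSeq P r)
    (p q : ℝ) (hp : 0 < p) (hpq : p < q)
    (w : Ω → ℝ) (hw : MemLp w (ENNReal.ofReal q) P)
    (hw0 : P {ω | w ω ≠ 0} >
      ENNReal.ofReal (1 - 2 * Real.exp (-2 + Real.eulerMascheroniConstant))) :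
    ∃ C₁ > (0:ℝ), ∃ C₂ > (0:ℝ), ∀ (x : ℕ → ℝ) (ξ : Ω → ℝ),
      Summable (fun n => x n ^ 2) →
      (∀ᵐ ω ∂P, HasSum (fun n => r n ω * x n) (ξ ω)) →
      ENNReal.ofReal (C₁⁻¹ * (∑' n, x n ^ 2) ^ (1/2 : ℝ)) ≤
        eLpNorm (fun ω => w ω * ξ ω) (ENNReal.ofReal p) P ∧
      eLpNorm (fun ω => w ω * ξ ω) (ENNReal.ofReal p) P ≤
        ENNReal.ofReal (C₂ * (∑' n, x n ^ 2) ^ (1/2 : ℝ)) := by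
  have hw0' : ENNReal.ofReal 0.501 < P {ω | w ω ≠ 0} :=
    (ENNReal.ofReal_le_ofReal
      lt_one_sub_two_mul_exp_neg_two_add_eulerMascheroniConstant.le).trans_lt hw0
  obtain ⟨c, hc, hlower⟩ := hr.exists_le_eLpNorm_mul_of_hasSum hp hw.1 hw0'
  obtain ⟨C, hC, hupper⟩ := hr.exists_eLpNorm_mul_le_of_hasSum hp hpq hw
  refine ⟨c⁻¹, inv_pos.2 hc, C, hC, fun x ξ hx hξ => ?_⟩
  rw [inv_inv, ← Real.sqrt_eq_rpow]
  exact ⟨hlower x ξ hx hξ, hupper x ξ hx hξ⟩
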